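/- arXiv:2004.05213 — 2 statements merged into one kernel-verified Lean document; each statement's English description precedes it below -/
import Mathlib

section
/- In a finite turn-based two-player deterministic reachability game, if Player 1 has a winning strategy from state s, then Player 1 has a memoryless (positional) winning strategy from s, i.e., a strategy depending only on the current state. -/
/-- A finite turn-based two-player deterministic game graph:
states partitioned into Player-1 states (`isP1`) and Player-2 states,
with a nonempty set of successors at each state. -/
structure GameGraph (S : Type) where
  isP1 : S → Prop
  succ : S → Set S
  succ_nonempty : ∀ s, (succ s).Nonempty

namespace GameGraph

variable {S : Type}

/-- An infinite play following the successor relation. -/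
def IsPlay (G : GameGraph S) (ρ : ℕ → S) : Prop :=
  ∀ n, ρ (n + 1) ∈ G.succ (ρ n)

/-- A (history-dependent) strategy: given the past history and the current state,
choose a successor. -/
abbrev Strategy (S : Type) := List S → S → S

/-- A strategy is valid if it always chooses a successor of the current state. -/
def Valid (G : GameGraph S) (σ : Strategy S) : Prop :=
  ∀ h s, σ h s ∈ G.succ s

/-- The history of the play strictly before time `n`. -/
def hist (ρ : ℕ → S) (n : ℕ) : List S := (List.range n).map ρ

/-- A play is consistent with Player 1's strategy `σ` if at every Player-1 state the
next state is the one chosen by `σ`. -/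
def ConsistentP1 (G : GameGraph S) (σ : Strategy S) (ρ : ℕ → S) : Prop :=
  ∀ n, G.isP1 (ρ n) → ρ (n + 1) = σ (hist ρ n) (ρ n)

/-- A play is consistent with Player 2's strategy `τ` if at every Player-2 state the
next state is the one chosen by `τ`. -/
def ConsistentP2 (G : GameGraph S) (τ : Strategy S) (ρ : ℕ → S) : Prop :=
  ∀ n, ¬ G.isP1 (ρ n) → ρ (n + 1) = τ (hist ρ n) (ρ n)

/-- Player 1 wins the reachability objective `F` from `s`:
he has a strategy forcing every consistent play from `s` to visit `F`. -/
def P1Wins (G : GameGraph S) (F : Set S) (s : S) : Prop :=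
  ∃ σ : Strategy S, G.Valid σ ∧
    ∀ ρ, G.IsPlay ρ → ρ 0 = s → G.ConsistentP1 σ ρ → ∃ n, ρ n ∈ F

/-- Player 2 wins the complementary safety objective from `s`:
she has a strategy forcing every consistent play from `s` to avoid `F` forever. -/
def P2Wins (G : GameGraph S) (F : Set S) (s : S) : Prop :=
  ∃ τ : Strategy S, G.Valid τ ∧
    ∀ ρ, G.IsPlay ρ → ρ 0 = s → G.ConsistentP2 τ ρ → ∀ n, ρ n ∉ F

end GameGraph

/-- Player 1 wins from `s` using a memoryless (positional) strategy: a map from states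
to successors such that every consistent play from `s` reaches `F`. -/
def GameGraph.MemorylessP1Wins {S : Type} (G : GameGraph S) (F : Set S) (s : S) : Prop :=
  ∃ σ : S → S, (∀ t, σ t ∈ G.succ t) ∧
    ∀ ρ, G.IsPlay ρ → ρ 0 = s →
      (∀ n, G.isP1 (ρ n) → ρ (n + 1) = σ (ρ n)) → ∃ n, ρ n ∈ F

section MemorylessAux

open Classical

variable {S : Type} (G : GameGraph S) (F : Set S)

/-- Attractor levels for Player 1 toward `F`. -/
def ReachAttr : ℕ → Set S
  | 0 => F
  | n+1 => ReachAttr n ∪ {t | (G.isP1 t ∧ ∃ u ∈ G.succ t, u ∈ ReachAttr n) ∨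
      (¬ G.isP1 t ∧ ∀ u ∈ G.succ t, u ∈ ReachAttr n)}

lemma ReachAttr_mono {m n : ℕ} (h : m ≤ n) : ReachAttr G F m ⊆ ReachAttr G F n := by
  induction h with
  | refl => exact subset_rfl
  | step _ ih => exact ih.trans Set.subset_union_left

lemma reachAttr_key {t : S} (h1 : G.isP1 t) {n : ℕ}
    (h2 : t ∈ ReachAttr G F (n+1)) (h3 : t ∉ ReachAttr G F n) :
    ∃ u ∈ G.succ t, u ∈ ReachAttr G F n := by
  rcases h2 with h | h
  · exact absurd h h3
  · rcases h with ⟨_, h⟩ | ⟨h, _⟩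
    · exact h
    · exact absurd h1 h

lemma reachAttr_strict {t : S} {n : ℕ} (h : t ∈ ReachAttr G F n) (hF : t ∉ F) :
    ∃ m, t ∈ ReachAttr G F (m+1) ∧ t ∉ ReachAttr G F m := by
  induction n with
  | zero => exact absurd h hF
  | succ n ih =>
    by_cases hn : t ∈ ReachAttr G F n
    · exact ih hn
    · exact ⟨n, h, hn⟩

/-- The memoryless strategy: at a Player-1 state strictly gaining a level,
move toward a lower attractor level; otherwise arbitrary successor. -/
noncomputable def posStrat (t : S) : S :=
  if h : G.isP1 t ∧ ∃ m, t ∈ ReachAttr G F (m+1) ∧ t ∉ ReachAttr G F m then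
    (reachAttr_key G F h.1 h.2.choose_spec.1 h.2.choose_spec.2).choose
  else (G.succ_nonempty t).choose

lemma posStrat_succ (t : S) : posStrat G F t ∈ G.succ t := by
  unfold posStrat
  split
  · next h => exact (reachAttr_key G F h.1 h.2.choose_spec.1 h.2.choose_spec.2).choose_spec.1
  · exact (G.succ_nonempty t).choose_spec

lemma posStrat_spec {t : S} (h1 : G.isP1 t) (hF : t ∉ F) {n : ℕ}
    (h2 : t ∈ ReachAttr G F (n+1)) : posStrat G F t ∈ ReachAttr G F n := by
  have hex : ∃ m, t ∈ ReachAttr G F (m+1) ∧ t ∉ ReachAttr G F m :=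
    reachAttr_strict G F h2 hF
  have hcond : G.isP1 t ∧ ∃ m, t ∈ ReachAttr G F (m+1) ∧ t ∉ ReachAttr G F m := ⟨h1, hex⟩
  rw [posStrat, dif_pos hcond]
  have hspec := (reachAttr_key G F hcond.1 hcond.2.choose_spec.1
      hcond.2.choose_spec.2).choose_spec
  -- hspec.2 : choose ∈ ReachAttr (m'), with t ∉ ReachAttr m'
  have hm : hcond.2.choose ≤ n := by
    by_contra hlt
    push_neg at hlt
    exact hcond.2.choose_spec.2 (ReachAttr_mono G F hlt h2)
  exact ReachAttr_mono G F hm hspec.2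

lemma attr_reach : ∀ n, ∀ ρ : ℕ → S, G.IsPlay ρ →
    (∀ k, G.isP1 (ρ k) → ρ (k+1) = posStrat G F (ρ k)) →
    ρ 0 ∈ ReachAttr G F n → ∃ k, ρ k ∈ F := by
  intro n
  induction n with
  | zero => exact fun ρ _ _ h0 => ⟨0, h0⟩
  | succ n ih =>
    intro ρ hplay hcons h0
    by_cases hF : ρ 0 ∈ F
    · exact ⟨0, hF⟩
    have shift : ρ 1 ∈ ReachAttr G F n → ∃ k, ρ k ∈ F := by
      intro h1
      obtain ⟨k, hk⟩ := ih (fun k => ρ (k+1)) (fun k => hplay (k+1))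
        (fun k => hcons (k+1)) h1
      exact ⟨k+1, hk⟩
    by_cases hP : G.isP1 (ρ 0)
    · apply shift
      rw [hcons 0 hP]
      exact posStrat_spec G F hP hF h0
    · rcases h0 with h0 | h0
      · exact ih ρ hplay hcons h0
      · rcases h0 with ⟨hp1, _⟩ | ⟨_, hall⟩
        · exact absurd hp1 hP
        · exact shift (hall _ (hplay 0))

lemma notA_P1 {t u : S} (ht : ∀ m, t ∉ ReachAttr G F m) (hP : G.isP1 t)
    (hu : u ∈ G.succ t) : ∀ m, u ∉ ReachAttr G F m := by
  intro m hm
  exact ht (m+1) (Or.inr (Or.inl ⟨hP, u, hu, hm⟩))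

lemma notA_P2 [Fintype S] {t : S} (ht : ∀ m, t ∉ ReachAttr G F m) (hP : ¬ G.isP1 t) :
    ∃ u ∈ G.succ t, ∀ m, u ∉ ReachAttr G F m := by
  by_contra hcon
  push_neg at hcon
  -- every successor is in some level; take the max over all states
  set f : S → ℕ := fun u => if h : ∃ m, u ∈ ReachAttr G F m then h.choose else 0 with hf
  set N : ℕ := Finset.univ.sup f with hN
  apply ht (N+1)
  refine Or.inr (Or.inr ⟨hP, fun u hu => ?_⟩)
  obtain ⟨m, hm⟩ := hcon u hu
  have hex : ∃ m, u ∈ ReachAttr G F m := ⟨m, hm⟩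
  have h1 : u ∈ ReachAttr G F (f u) := by
    rw [hf]; simp only [dif_pos hex]; exact hex.choose_spec
  exact ReachAttr_mono G F (Finset.le_sup (Finset.mem_univ u)) h1

/-- Escaping play against a given strategy `σ`, staying outside the attractor. -/
noncomputable def escPlay (σ : GameGraph.Strategy S) (s : S) : ℕ → S × List S
  | 0 => (s, [])
  | n+1 =>
    let p := escPlay σ s n
    (if G.isP1 p.1 then σ p.2 p.1
     else if h : ∃ u ∈ G.succ p.1, ∀ m, u ∉ ReachAttr G F m then h.choose
     else (G.succ_nonempty p.1).choose,
     p.2 ++ [p.1])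

lemma escPlay_hist (σ : GameGraph.Strategy S) (s : S) (n : ℕ) :
    (escPlay G F σ s n).2 = GameGraph.hist (fun k => (escPlay G F σ s k).1) n := by
  induction n with
  | zero => simp [escPlay, GameGraph.hist]
  | succ n ih =>
    show (escPlay G F σ s n).2 ++ [(escPlay G F σ s n).1] = _
    rw [ih, GameGraph.hist, GameGraph.hist, List.range_succ, List.map_append, List.map_singleton]

end MemorylessAux

/-- **Memoryless determinacy for reachability.** If Player 1 has a winning
strategy from `s` in a finite turn-based deterministic reachability game, then Player 1
has a memoryless winning strategy from `s`. -/
theorem memoryless_reachability {S : Type} [Fintype S]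
    (G : GameGraph S) (F : Set S) (s : S) :
    G.P1Wins F s → G.MemorylessP1Wins F s := by
  intro hwin
  classical
  have hA : ∃ n, s ∈ ReachAttr G F n := by
    by_contra hs
    push_neg at hs
    obtain ⟨σ, hv, hw⟩ := hwin
    set ρ : ℕ → S := fun k => (escPlay G F σ s k).1 with hρ
    have hinv : ∀ n, ∀ m, ρ n ∉ ReachAttr G F m := by
      intro n
      induction n with
      | zero => exact hs
      | succ n ih =>
        show ∀ m, (escPlay G F σ s (n+1)).1 ∉ ReachAttr G F m
        by_cases hP : G.isP1 (ρ n)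
        · have : (escPlay G F σ s (n+1)).1 = σ (escPlay G F σ s n).2 (ρ n) := by
            show (if G.isP1 (escPlay G F σ s n).1 then _ else _) = _
            rw [if_pos hP]
          rw [this]
          exact notA_P1 G F ih hP (hv _ _)
        · have hex : ∃ u ∈ G.succ (ρ n), ∀ m, u ∉ ReachAttr G F m :=
            notA_P2 G F ih hP
          have : (escPlay G F σ s (n+1)).1 = hex.choose := by
            show (if G.isP1 (escPlay G F σ s n).1 then _ else _) = _
            rw [if_neg hP, dif_pos hex]
          rw [this]
          exact hex.choose_spec.2
    have hplay : G.IsPlay ρ := by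
      intro n
      show (escPlay G F σ s (n+1)).1 ∈ G.succ (ρ n)
      by_cases hP : G.isP1 (ρ n)
      · show (if G.isP1 (escPlay G F σ s n).1 then _ else _) ∈ _
        rw [if_pos hP]
        exact hv _ _
      · have hex : ∃ u ∈ G.succ (ρ n), ∀ m, u ∉ ReachAttr G F m :=
          notA_P2 G F (hinv n) hP
        show (if G.isP1 (escPlay G F σ s n).1 then _ else _) ∈ _
        rw [if_neg hP, dif_pos hex]
        exact hex.choose_spec.1
    have hcons : G.ConsistentP1 σ ρ := by
      intro n hP
      show (escPlay G F σ s (n+1)).1 = _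
      show (if G.isP1 (escPlay G F σ s n).1 then _ else _) = _
      rw [if_pos hP, escPlay_hist]
    obtain ⟨n, hn⟩ := hw ρ hplay rfl hcons
    exact hinv n 0 hn
  obtain ⟨n, hn⟩ := hA
  refine ⟨posStrat G F, posStrat_succ G F, fun ρ hp h0 hc => ?_⟩
  exact attr_reach G F n ρ hp hc (h0 ▸ hn)
end

section
/- In a finite Markov decision process where only the support of the transition probabilities is known, whether a state is almost-surely winning for the reachability objective depends only on the supports: if two MDPs have the same states, actions, and transition supports, then a state is almost-surely winning (there is a strategy reaching the target with probability 1) in one iff it is in the other. -/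
noncomputable section

/-- Probability of reaching `F` within `n` steps in a finite MDP with transition
probabilities `P`, under the (history-dependent, deterministic) strategy `σ`, starting
from history `h` and current state `v`. -/
def reachProb {V A : Type} [Fintype V] (P : V → A → V → ℝ) (σ : List V → A)
    (F : Set V) [DecidablePred (· ∈ F)] : ℕ → List V → V → ℝ
  | 0, _, v => if v ∈ F then 1 else 0
  | n + 1, h, v =>
      if v ∈ F then 1
      else ∑ v' : V, P v (σ (h ++ [v])) v' * reachProb P σ F n (h ++ [v]) v'

/-- State `v` is almost-surely winning for the reachability objective `F`:
some strategy reaches `F` with probability `1` (in the limit over horizons). -/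
def AlmostSure {V A : Type} [Fintype V] (P : V → A → V → ℝ) (F : Set V)
    [DecidablePred (· ∈ F)] (v : V) : Prop :=
  ∃ σ : List V → A, (⨆ n : ℕ, reachProb P σ F n [] v) = 1

/-!
Almost-sure reachability has a characterization that mentions only the supports: `v` is winning
iff it lies in a set `W` of states from each of which `F` can be reached along positive-probability
transitions, using only actions whose whole support stays in `W`.

If `σ` wins almost surely from `v`, the almost-surely winning states form such a `W`: almost-sure
winning survives every positive-probability transition of the action that `σ` plays. Conversely,
given `W`, play at each state an action that decreases the distance to `F`. Under this memoryless
strategy the limit reachability value `p` satisfies the Bellman equation, so the states of `W` where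
`p` attains its minimum are closed under the chosen positive-probability transitions; descending
the distance from one of them ends in `F`, where `p = 1`, so the minimum of `p` on `W` is `1`.
-/

namespace MDP

open Filter Topology

section Support

variable {V A : Type}

def ReachWithin (S : V → A → V → Prop) (F W : Set V) : ℕ → V → Prop
  | 0, v => v ∈ F
  | n + 1, v =>
      v ∈ F ∨ ∃ a, (∀ v', S v a v' → v' ∈ W) ∧ ∃ v', S v a v' ∧ ReachWithin S F W n v'

def SupportWinning (S : V → A → V → Prop) (F : Set V) (v : V) : Prop :=
  ∃ W : Set V, v ∈ W ∧ ∀ u ∈ W, ∃ n, ReachWithin S F W n u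

theorem exists_rankingStrategy [Nonempty A] {S : V → A → V → Prop} {F W : Set V}
    (hW : ∀ u ∈ W, ∃ n, ReachWithin S F W n u) :
    ∃ (α : V → A) (r : V → ℕ), ∀ u ∈ W, u ∉ F →
      (∀ v', S u (α u) v' → v' ∈ W) ∧ ∃ v', S u (α u) v' ∧ r v' < r u := by
  let r u := sInf {n | ReachWithin S F W n u}
  have hchoice : ∀ u, ∃ a, u ∈ W → u ∉ F →
      (∀ v', S u a v' → v' ∈ W) ∧ ∃ v', S u a v' ∧ r v' < r u := by
    intro u
    by_cases hu : u ∈ W ∧ u ∉ F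
    swap
    · exact ⟨Classical.arbitrary A, fun huW huF => absurd ⟨huW, huF⟩ hu⟩
    have hreach : ReachWithin S F W (r u) u := Nat.sInf_mem (hW u hu.1)
    cases hr : r u with
    | zero => rw [hr] at hreach; exact absurd hreach hu.2
    | succ k =>
      rw [hr] at hreach
      obtain ⟨a, hsafe, v', hS, hv'⟩ := hreach.resolve_left hu.2
      exact ⟨a, fun _ _ => ⟨hsafe, v', hS, (Nat.sInf_le hv').trans_lt k.lt_succ_self⟩⟩
  choose α hα using hchoice
  exact ⟨α, r, hα⟩

theorem exists_mem_of_rank_descent {M F : Set V} (r : V → ℕ)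
    (hdesc : ∀ u ∈ M, u ∉ F → ∃ v ∈ M, r v < r u) {u : V} (hu : u ∈ M) :
    ∃ w ∈ M, w ∈ F := by
  induction u using (measure r).wf.induction with
  | h u ih =>
    by_cases huF : u ∈ F
    · exact ⟨u, hu, huF⟩
    · obtain ⟨v, hv, hlt⟩ := hdesc u hu huF
      exact ih v hlt hv

end Support

theorem eq_of_sum_mul_eq_sum_mul {ι : Type*} [Fintype ι] {w x y : ι → ℝ}
    (hw : ∀ i, 0 ≤ w i) (hle : ∀ i, 0 < w i → x i ≤ y i)
    (h : ∑ i, w i * x i = ∑ i, w i * y i) {i : ι} (hi : 0 < w i) : x i = y i := by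
  have hterm : ∀ j ∈ Finset.univ, w j * x j ≤ w j * y j := by
    intro j _
    rcases (hw j).eq_or_lt with h0 | hpos
    · simp [← h0]
    · exact mul_le_mul_of_nonneg_left (hle j hpos) hpos.le
  exact mul_left_cancel₀ hi.ne' ((Finset.sum_eq_sum_iff_of_le hterm).1 h i (Finset.mem_univ i))

section Probability

variable {V A : Type} [Fintype V]

def IsStochastic (P : V → A → V → ℝ) : Prop :=
  ∀ v a, (∀ v', 0 ≤ P v a v') ∧ ∑ v' : V, P v a v' = 1

def support (P : V → A → V → ℝ) (v : V) (a : A) (v' : V) : Prop :=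
  0 < P v a v'

def reachValue (P : V → A → V → ℝ) (σ : List V → A) (F : Set V)
    [DecidablePred (· ∈ F)] (h : List V) (u : V) : ℝ :=
  ⨆ n, reachProb P σ F n h u

variable {P : V → A → V → ℝ} {σ : List V → A} {F : Set V} [DecidablePred (· ∈ F)]

theorem reachProb_of_mem {u : V} (hu : u ∈ F) (n : ℕ) (h : List V) :
    reachProb P σ F n h u = 1 := by
  cases n <;> simp [reachProb, hu]

theorem reachProb_succ_of_notMem {u : V} (hu : u ∉ F) (n : ℕ) (h : List V) :
    reachProb P σ F (n + 1) h u
      = ∑ v', P u (σ (h ++ [u])) v' * reachProb P σ F n (h ++ [u]) v' := by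
  simp [reachProb, hu]

theorem reachProb_mem_Icc (hP : IsStochastic P) (n : ℕ) (h : List V) (u : V) :
    reachProb P σ F n h u ∈ Set.Icc 0 1 := by
  induction n generalizing h u with
  | zero => unfold reachProb; split_ifs <;> simp
  | succ n ih =>
    by_cases hu : u ∈ F
    · simp [reachProb_of_mem hu]
    rw [reachProb_succ_of_notMem hu]
    obtain ⟨hnn, hsum⟩ := hP u (σ (h ++ [u]))
    constructor
    · exact Finset.sum_nonneg fun v' _ => mul_nonneg (hnn v') (ih _ _).1
    · calc _ ≤ ∑ v', P u (σ (h ++ [u])) v' :=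
            Finset.sum_le_sum fun v' _ => mul_le_of_le_one_right (hnn v') (ih _ _).2
        _ = 1 := hsum

theorem reachProb_monotone (hP : IsStochastic P) (h : List V) (u : V) :
    Monotone fun n => reachProb P σ F n h u := by
  refine monotone_nat_of_le_succ fun n => ?_
  induction n generalizing h u with
  | zero =>
    by_cases hu : u ∈ F
    · simp [reachProb_of_mem hu]
    · rw [show reachProb P σ F 0 h u = 0 by simp [reachProb, hu]]
      exact (reachProb_mem_Icc hP 1 h u).1
  | succ n ih =>
    by_cases hu : u ∈ F
    · simp [reachProb_of_mem hu]
    · rw [reachProb_succ_of_notMem hu, reachProb_succ_of_notMem hu]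
      exact Finset.sum_le_sum fun v' _ =>
        mul_le_mul_of_nonneg_left (ih _ _) ((hP u _).1 v')

theorem tendsto_reachProb (hP : IsStochastic P) (h : List V) (u : V) :
    Tendsto (fun n => reachProb P σ F n h u) atTop (𝓝 (reachValue P σ F h u)) :=
  tendsto_atTop_ciSup (reachProb_monotone hP h u)
    ⟨1, by rintro _ ⟨n, rfl⟩; exact (reachProb_mem_Icc hP n h u).2⟩

theorem reachValue_le_one (hP : IsStochastic P) (h : List V) (u : V) :
    reachValue P σ F h u ≤ 1 :=
  ciSup_le fun n => (reachProb_mem_Icc hP n h u).2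

theorem reachValue_of_mem {u : V} (hu : u ∈ F) (h : List V) : reachValue P σ F h u = 1 := by
  simp [reachValue, reachProb_of_mem hu]

theorem reachValue_eq_sum (hP : IsStochastic P) {u : V} (hu : u ∉ F) (h : List V) :
    reachValue P σ F h u
      = ∑ v', P u (σ (h ++ [u])) v' * reachValue P σ F (h ++ [u]) v' := by
  refine tendsto_nhds_unique ((tendsto_reachProb hP h u).comp (tendsto_add_atTop_nat 1)) ?_
  simp only [Function.comp_def, reachProb_succ_of_notMem hu]
  exact tendsto_finsetSum _ fun v' _ => (tendsto_reachProb hP _ v').const_mul _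

theorem reachValue_eq_one_of_pos (hP : IsStochastic P) {h : List V} {u v' : V}
    (hwin : reachValue P σ F h u = 1) (hu : u ∉ F) (hv' : 0 < P u (σ (h ++ [u])) v') :
    reachValue P σ F (h ++ [u]) v' = 1 := by
  refine eq_of_sum_mul_eq_sum_mul (hP u _).1 (fun w _ => reachValue_le_one hP _ w) ?_ hv'
  rw [← reachValue_eq_sum hP hu, hwin]
  simp [(hP u _).2]

theorem reachProb_append_strategy (g : List V) (n : ℕ) (h : List V) (u : V) :
    reachProb P (fun l => σ (g ++ l)) F n h u = reachProb P σ F n (g ++ h) u := by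
  induction n generalizing h u with
  | zero => simp [reachProb]
  | succ n ih =>
    by_cases hu : u ∈ F
    · simp [reachProb_of_mem hu]
    · rw [reachProb_succ_of_notMem hu, reachProb_succ_of_notMem hu]
      simp only [ih, List.append_assoc]

theorem almostSure_of_reachValue_eq_one {h : List V} {u : V}
    (hwin : reachValue P σ F h u = 1) : AlmostSure P F u :=
  ⟨fun l => σ (h ++ l), by simpa [reachValue, reachProb_append_strategy] using hwin⟩

theorem reachWithin_of_reachProb_pos (hP : IsStochastic P) (n : ℕ) (h : List V) (u : V)
    (hwin : reachValue P σ F h u = 1) (hpos : 0 < reachProb P σ F n h u) :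
    ReachWithin (support P) F {w | AlmostSure P F w} n u := by
  induction n generalizing h u with
  | zero =>
    change u ∈ F
    by_contra hu
    simp [reachProb, hu] at hpos
  | succ n ih =>
    by_cases hu : u ∈ F
    · exact Or.inl hu
    rw [reachProb_succ_of_notMem hu] at hpos
    obtain ⟨v', -, hv'⟩ := Finset.exists_lt_of_sum_lt (s := Finset.univ)
      (f := fun _ => (0 : ℝ)) (by simpa using hpos)
    obtain ⟨hPv', hreach⟩ := (pos_and_pos_or_neg_and_neg_of_mul_pos hv').resolve_right
      fun hneg => ((hP u _).1 v').not_gt hneg.1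
    exact Or.inr ⟨σ (h ++ [u]),
      fun w hw => almostSure_of_reachValue_eq_one (reachValue_eq_one_of_pos hP hwin hu hw),
      v', hPv', ih _ _ (reachValue_eq_one_of_pos hP hwin hu hPv') hreach⟩

theorem supportWinning_of_almostSure (hP : IsStochastic P) {v : V} (hv : AlmostSure P F v) :
    SupportWinning (support P) F v := by
  refine ⟨{w | AlmostSure P F w}, hv, fun u ⟨σ, (hwin : reachValue P σ F [] u = 1)⟩ => ?_⟩
  obtain ⟨n, hn⟩ : ∃ n, 0 < reachProb P σ F n [] u := by
    by_contra! hzero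
    have : reachValue P σ F [] u ≤ 0 := ciSup_le hzero
    linarith
  exact ⟨n, reachWithin_of_reachProb_pos hP n [] u hwin hn⟩

section Memoryless

variable {α : V → A} (hσ : ∀ h u, σ (h ++ [u]) = α u)
include hσ

theorem reachProb_eq_nil_of_memoryless (n : ℕ) (h : List V) (u : V) :
    reachProb P σ F n h u = reachProb P σ F n [] u := by
  induction n generalizing h u with
  | zero => simp [reachProb]
  | succ n ih =>
    by_cases hu : u ∈ F
    · simp [reachProb_of_mem hu]
    · rw [reachProb_succ_of_notMem hu, reachProb_succ_of_notMem hu]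
      refine Finset.sum_congr rfl fun v' _ => ?_
      rw [hσ, hσ, ih, ih ([] ++ [u])]

theorem reachValue_eq_sum_of_memoryless (hP : IsStochastic P) {u : V} (hu : u ∉ F) :
    reachValue P σ F [] u = ∑ v', P u (α u) v' * reachValue P σ F [] v' := by
  rw [reachValue_eq_sum hP hu, hσ]
  simp only [reachValue, reachProb_eq_nil_of_memoryless hσ _ ([] ++ [u])]

theorem reachValue_eq_one_of_ranking (hP : IsStochastic P) {W : Set V} {r : V → ℕ}
    (hrank : ∀ u ∈ W, u ∉ F →
      (∀ v', 0 < P u (α u) v' → v' ∈ W) ∧ ∃ v', 0 < P u (α u) v' ∧ r v' < r u)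
    {v : V} (hv : v ∈ W) : reachValue P σ F [] v = 1 := by
  set p := reachValue P σ F []
  obtain ⟨u₀, hu₀, hmin⟩ := W.exists_min_image p W.toFinite ⟨v, hv⟩
  set m := p u₀
  have hdesc : ∀ u ∈ {u ∈ W | p u = m}, u ∉ F →
      ∃ w ∈ {u ∈ W | p u = m}, r w < r u := by
    rintro u ⟨huW, hum⟩ huF
    obtain ⟨hsafe, w, hw, hr⟩ := hrank u huW huF
    refine ⟨w, ⟨hsafe w hw, ?_⟩, hr⟩
    refine (eq_of_sum_mul_eq_sum_mul (x := fun _ => m) (hP u (α u)).1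
      (fun w' hw' => hmin w' (hsafe w' hw')) ?_ hw).symm
    rw [← Finset.sum_mul, (hP u (α u)).2, one_mul, ← hum]
    exact reachValue_eq_sum_of_memoryless hσ hP huF
  obtain ⟨w, ⟨-, hwm⟩, hwF⟩ := exists_mem_of_rank_descent r hdesc ⟨hu₀, rfl⟩
  have hm : m = 1 := hwm ▸ reachValue_of_mem hwF []
  exact le_antisymm (reachValue_le_one hP [] v) (hm ▸ hmin v hv)

end Memoryless

theorem almostSure_of_supportWinning [Nonempty A] (hP : IsStochastic P) {v : V}
    (hv : SupportWinning (support P) F v) : AlmostSure P F v := by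
  obtain ⟨W, hvW, hW⟩ := hv
  obtain ⟨α, r, hrank⟩ := exists_rankingStrategy hW
  exact ⟨fun l => α (l.getLastD v),
    reachValue_eq_one_of_ranking (P := P) (α := α) (fun _ _ => congrArg α List.getLastD_concat)
      hP hrank hvW⟩

theorem almostSure_iff_supportWinning (hP : IsStochastic P) {v : V} :
    AlmostSure P F v ↔ Nonempty A ∧ SupportWinning (support P) F v :=
  ⟨fun hv => ⟨⟨hv.choose []⟩, supportWinning_of_almostSure hP hv⟩,
    fun ⟨_, hv⟩ => almostSure_of_supportWinning hP hv⟩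

end Probability

end MDP

theorem almost_sure_depends_only_on_support_general {V A : Type} [Fintype V]
    (P P' : V → A → V → ℝ) (F : Set V) [DecidablePred (· ∈ F)]
    (hP : ∀ v a, (∀ v', 0 ≤ P v a v') ∧ ∑ v' : V, P v a v' = 1)
    (hP' : ∀ v a, (∀ v', 0 ≤ P' v a v') ∧ ∑ v' : V, P' v a v' = 1)
    (hsupp : ∀ v a v', 0 < P v a v' ↔ 0 < P' v a v')
    (v : V) :
    AlmostSure P F v ↔ AlmostSure P' F v := by
  have hS : MDP.support P = MDP.support P' := funext₃ fun u a u' => propext (hsupp u a u')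
  rw [MDP.almostSure_iff_supportWinning hP, MDP.almostSure_iff_supportWinning hP', hS]

/-- **Almost-sure reachability depends only on transition supports.**
If two finite MDPs have the same states, actions, and transition supports, with `F`
absorbing in both, then a state is almost-surely winning in one iff it is in the other. -/
theorem almost_sure_depends_only_on_support {V A : Type} [Fintype V] [Nonempty A]
    (P P' : V → A → V → ℝ) (F : Set V) [DecidablePred (· ∈ F)]
    (hP : ∀ v a, (∀ v', 0 ≤ P v a v') ∧ ∑ v' : V, P v a v' = 1)
    (hP' : ∀ v a, (∀ v', 0 ≤ P' v a v') ∧ ∑ v' : V, P' v a v' = 1)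
    (hsupp : ∀ v a v', 0 < P v a v' ↔ 0 < P' v a v')
    (habs : ∀ v ∈ F, ∀ a v', 0 < P v a v' → v' ∈ F)
    (habs' : ∀ v ∈ F, ∀ a v', 0 < P' v a v' → v' ∈ F)
    (v : V) :
    AlmostSure P F v ↔ AlmostSure P' F v :=
  almost_sure_depends_only_on_support_general P P' F hP hP' hsupp v

end
end
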